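/- Let a ∈ ℝ, b = a + k with k ∈ ℕ, k ≥ 2, 𝕋 = {a, a+1, …, b}, σ(t) = t+1, and let f : 𝕋 → ℝ. For every ν > 0 and every t ∈ 𝕋 one has ( _tΔ_b^{−ν} f )(t) = f(t) + Σ_{s=t+1}^{b} ( ∏_{i=0}^{s−t−1}(ν+i) / Γ(s−t+1) ) f(s), and consequently lim_{ν→0⁺} ( _tΔ_b^{−ν} f )(t) = f(t). -/

import Mathlib

/-- The factorial function `x^{(y)} = Γ(x+1)/Γ(x+1−y)`. -/
noncomputable def ffac (x y : ℝ) : ℝ := Real.Gamma (x + 1) / Real.Gamma (x + 1 - y)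

/-- The right fractional sum `( _tΔ_c^{−ν} g )(t)` at `t = a + i` with right
endpoint `c = a + m` on `𝕋 = {a, a+1, …}`. -/
noncomputable def rsum (a ν : ℝ) (g : ℝ → ℝ) (i m : ℕ) : ℝ :=
  (1 / Real.Gamma ν) *
    ∑ j ∈ Finset.Icc i m, ffac ((a + j) + ν - (a + i + 1)) (ν - 1) * g (a + j)

lemma gamma_add_nat (ν : ℝ) (hν : 0 < ν) (n : ℕ) :
    Real.Gamma (ν + n) = (∏ l ∈ Finset.range n, (ν + l)) * Real.Gamma ν := by
  induction n with
  | zero => simp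
  | succ n ih =>
    have h1 : ν + ((n : ℕ) + 1 : ℕ) = (ν + n) + 1 := by push_cast; ring
    have hne : ν + (n : ℝ) ≠ 0 := by positivity
    rw [h1, Real.Gamma_add_one hne, ih, Finset.prod_range_succ]
    ring

/-- on `𝕋 = {a, …, a+k}`, `k ≥ 2`, for every `t = a + i ∈ 𝕋`
and every `ν > 0`,
`( _tΔ_b^{−ν} f )(t) = f(t) + Σ_{s=t+1}^{b} (∏_{l=0}^{s−t−1}(ν+l) / Γ(s−t+1)) f(s)`,
and consequently `( _tΔ_b^{−ν} f )(t) → f(t)` as `ν → 0⁺`. -/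
theorem stmt6 (a : ℝ) (k : ℕ) (hk : 2 ≤ k) (f : ℝ → ℝ) (i : ℕ) (hi : i ≤ k) :
    (∀ ν : ℝ, 0 < ν →
      rsum a ν f i k = f (a + i) + ∑ j ∈ Finset.Icc (i + 1) k,
        (∏ l ∈ Finset.range (j - i), (ν + l)) / Real.Gamma ((j : ℝ) - i + 1) * f (a + j))
    ∧ Filter.Tendsto (fun ν : ℝ => rsum a ν f i k)
        (nhdsWithin 0 (Set.Ioi 0)) (nhds (f (a + i))) := by
  have key : ∀ ν : ℝ, 0 < ν →
      rsum a ν f i k = f (a + i) + ∑ j ∈ Finset.Icc (i + 1) k,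
        (∏ l ∈ Finset.range (j - i), (ν + l)) / Real.Gamma ((j : ℝ) - i + 1) * f (a + j) := by
    intro ν hν
    have hΓ : Real.Gamma ν ≠ 0 := (Real.Gamma_pos_of_pos hν).ne'
    have hterm : ∀ j ∈ Finset.Icc i k,
        (1 / Real.Gamma ν) * (ffac ((a + j) + ν - (a + i + 1)) (ν - 1) * f (a + j))
        = (∏ l ∈ Finset.range (j - i), (ν + l)) / Real.Gamma ((j : ℝ) - i + 1) * f (a + j) := by
      intro j hj
      have hij : i ≤ j := (Finset.mem_Icc.mp hj).1
      have hcast : ((j - i : ℕ) : ℝ) = (j : ℝ) - i := by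
        rw [Nat.cast_sub hij]
      have h1 : (a + j) + ν - (a + i + 1) + 1 = ν + ((j - i : ℕ) : ℝ) := by
        rw [hcast]; ring
      have h2 : ν + ((j - i : ℕ) : ℝ) - (ν - 1) = ((j - i : ℕ) : ℝ) + 1 := by
        ring
      have hΓ2 : Real.Gamma (((j - i : ℕ) : ℝ) + 1) ≠ 0 := by
        have : (0:ℝ) < ((j - i : ℕ) : ℝ) + 1 := by positivity
        exact (Real.Gamma_pos_of_pos this).ne'
      unfold ffac
      rw [h1, h2, gamma_add_nat ν hν, ← hcast]
      field_simp
    have hsum : rsum a ν f i k = ∑ j ∈ Finset.Icc i k,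
        (∏ l ∈ Finset.range (j - i), (ν + l)) / Real.Gamma ((j : ℝ) - i + 1) * f (a + j) := by
      rw [rsum, Finset.mul_sum]
      exact Finset.sum_congr rfl hterm
    rw [hsum, Finset.Icc_add_one_left_eq_Ioc, ← Finset.Ioc_insert_left hi,
      Finset.sum_insert Finset.left_notMem_Ioc]
    congr 1
    simp [Real.Gamma_one]
  refine ⟨key, ?_⟩
  set g : ℝ → ℝ := fun ν => f (a + i) + ∑ j ∈ Finset.Icc (i + 1) k,
      (∏ l ∈ Finset.range (j - i), (ν + l)) / Real.Gamma ((j : ℝ) - i + 1) * f (a + j) with hg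
  have hc : Continuous g := by
    apply continuous_const.add
    apply continuous_finset_sum
    intro j _
    exact ((continuous_finset_prod _ (fun l _ => continuous_id.add continuous_const)).div_const
      _).mul continuous_const
  have hg0 : g 0 = f (a + i) := by
    rw [hg]
    simp only
    rw [Finset.sum_eq_zero, add_zero]
    intro j hj
    have hij : i + 1 ≤ j := (Finset.mem_Icc.mp hj).1
    have h0 : 0 ∈ Finset.range (j - i) := by
      rw [Finset.mem_range]
      omega
    rw [Finset.prod_eq_zero h0 (by norm_num)]
    simp
  have ht : Filter.Tendsto g (nhdsWithin 0 (Set.Ioi 0)) (nhds (f (a + i))) := by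
    rw [← hg0]
    exact (hc.tendsto 0).mono_left nhdsWithin_le_nhds
  exact ht.congr' (Filter.eventuallyEq_of_mem self_mem_nhdsWithin
    (fun ν hν => (key ν hν).symm))
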